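/- Let G be a finite simple graph on vertex set {x_{11}, …, x_{n1}} whose isolated vertices are exactly x_{11}, …, x_{t1} (with 0 ≤ t ≤ n), let m_1, …, m_n ≥ 2 be integers, and let G_1, …, G_n be connected finite simple graphs with V(G_i) = {x_{i1}, …, x_{im_i}}. Then the attachment graph G(G_1, …, G_n) is unmixed if and only if G_i is unmixed for every i = 1, …, n and G_i \ {x_{i1}} is unmixed for every i = t+1, …, n. -/

import Mathlib

/-!
A maximal independent set `S` of the attachment graph is independent in `G` and meets each block
`V(G_i)` in a maximal independent set of `G_i`, or, when `x_{i1} ∉ S` is dominated only through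
`G`, in a maximal independent set of `G_i \ x_{i1}`; conversely such blocks glue together.

If the attachment graph is unmixed, fix in every block a maximal independent set avoiding
`x_{j1}` (which has a neighbour in the connected `G_j`). Exchanging block `i` for any maximal
independent set of `G_i` keeps the union maximal, so `G_i` is unmixed. If `x_{i1}` has a
`G`-neighbour `x_{k1}`, choose the set in block `k` through `x_{k1}`; then block `i` can be any
maximal independent set of `G_i \ x_{i1}`, so `G_i \ x_{i1}` is unmixed.

Conversely, if `G_i` and, for non-isolated `x_{i1}`, also `G_i \ x_{i1}` are unmixed, the second
kind of block never occurs, so every maximal independent set of the attachment graph has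
`∑ i, α(G_i)` elements.
-/

variable {V : Type*} [DecidableEq V]

/-- `S` is an independent set of the induced subgraph of `G` on the vertex set `A`. -/
def IsIndepIn (G : SimpleGraph V) (A S : Finset V) : Prop :=
  S ⊆ A ∧ ∀ u ∈ S, ∀ v ∈ S, ¬G.Adj u v

/-- `S` is a maximal independent set of the induced subgraph of `G` on the vertex set `A`. -/
def IsMaxIndepIn (G : SimpleGraph V) (A S : Finset V) : Prop :=
  IsIndepIn G A S ∧ ∀ T, IsIndepIn G A T → S ⊆ T → S = T

/-- The induced subgraph of `G` on `A` is unmixed: all maximal independent sets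
have the same cardinality. -/
def UnmixedOn (G : SimpleGraph V) (A : Finset V) : Prop :=
  ∀ S T, IsMaxIndepIn G A S → IsMaxIndepIn G A T → S.card = T.card

open scoped Classical in
/-- The vertex set `A \ N_G[x]`. -/
noncomputable def delClosedNbhd (G : SimpleGraph V) (A : Finset V) (x : V) : Finset V :=
  A.filter fun y => y ≠ x ∧ ¬G.Adj x y

/-- The induced subgraph of `G` on `A` is vertex decomposable. -/
inductive VertexDecomposableOn (G : SimpleGraph V) : Finset V → Prop
  | edgeless (A : Finset V) (h : ∀ u ∈ A, ∀ v ∈ A, ¬G.Adj u v) : VertexDecomposableOn G A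
  | shed (A : Finset V) (x : V) (hx : x ∈ A)
      (hlink : VertexDecomposableOn G (delClosedNbhd G A x))
      (hdel : VertexDecomposableOn G (A.erase x))
      (hexch : ∀ S, IsIndepIn G (delClosedNbhd G A x) S →
        ∃ y ∈ A, G.Adj x y ∧ IsIndepIn G (A.erase x) (insert y S)) :
      VertexDecomposableOn G A

/-- `x` is a shedding vertex of the induced subgraph of `G` on `A`. -/
def IsSheddingVertexOn (G : SimpleGraph V) (A : Finset V) (x : V) : Prop :=
  x ∈ A ∧
  VertexDecomposableOn G (delClosedNbhd G A x) ∧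
  VertexDecomposableOn G (A.erase x) ∧
  ∀ S, IsIndepIn G (delClosedNbhd G A x) S →
    ∃ y ∈ A, G.Adj x y ∧ IsIndepIn G (A.erase x) (insert y S)

/-- The independence complex of the induced subgraph of `G` on `A` is shellable:
there is an ordering `F 0, F 1, …` of its facets (the maximal independent sets) such
that for every `i`, every face of the subcomplex `(⋃ j < i, ⟨F j⟩) ∩ ⟨F i⟩` is contained
in a face of that subcomplex of cardinality `(F i).card - 1` (i.e. the subcomplex is
pure of dimension `dim (F i) - 1`). -/
def ShellableOn (G : SimpleGraph V) (A : Finset V) : Prop :=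
  ∃ (t : ℕ) (F : Fin t → Finset V),
    Function.Injective F ∧
    (∀ S, IsMaxIndepIn G A S ↔ ∃ i, F i = S) ∧
    ∀ i : Fin t, ∀ S : Finset V, S ⊆ F i → (∃ j, j < i ∧ S ⊆ F j) →
      ∃ S' : Finset V, S ⊆ S' ∧ S' ⊆ F i ∧ (∃ j, j < i ∧ S' ⊆ F j) ∧
        S'.card = (F i).card - 1

/-- A graph is chordal if every cycle of length at least four has a chord, i.e. an
edge of the graph joining two vertices of the cycle that is not an edge of the cycle. -/
def IsChordal (G : SimpleGraph V) : Prop :=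
  ∀ (x : V) (w : G.Walk x x), w.IsCycle → 4 ≤ w.length →
    ∃ u v, u ∈ w.support ∧ v ∈ w.support ∧ G.Adj u v ∧ s(u, v) ∉ w.edges

/-- The induced subgraph of `G` on `A` is a cycle graph on `m` vertices. -/
def IsCycleGraphOn (G : SimpleGraph V) (A : Finset V) (m : ℕ) : Prop :=
  (∀ u v, G.Adj u v → u ∈ A ∧ v ∈ A) ∧
  Nonempty (G.induce (A : Set V) ≃g SimpleGraph.cycleGraph m)

/-- The independence number of the induced subgraph of `G` on `A`. -/
noncomputable def indepNumOn (G : SimpleGraph V) (A : Finset V) : ℕ :=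
  sSup {k | ∃ S, IsIndepIn G A S ∧ S.card = k}

open Finset Function

section

variable {V : Type*} {G : SimpleGraph V} {A S : Finset V}

lemma isIndepIn_singleton {v : V} (hv : v ∈ A) : IsIndepIn G A {v} :=
  ⟨singleton_subset_iff.2 hv, by simp⟩

lemma IsIndepIn.exists_isMaxIndepIn_superset (h : IsIndepIn G A S) :
    ∃ T, S ⊆ T ∧ IsMaxIndepIn G A T := by
  classical
  have hmem {T : Finset V} (hT : IsIndepIn G A T) : T ∈ A.powerset.filter (IsIndepIn G A) :=
    mem_filter.2 ⟨mem_powerset.2 hT.1, hT⟩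
  obtain ⟨T, hST, hT⟩ := exists_le_maximal _ (hmem h)
  exact ⟨T, hST, (mem_filter.1 hT.1).2, fun U hU hTU => hTU.antisymm (hT.2 (hmem hU) hTU)⟩

lemma exists_isMaxIndepIn_mem {v : V} (hv : v ∈ A) : ∃ S, IsMaxIndepIn G A S ∧ v ∈ S :=
  let ⟨S, hvS, hS⟩ := (isIndepIn_singleton (G := G) hv).exists_isMaxIndepIn_superset
  ⟨S, hS, singleton_subset_iff.1 hvS⟩

lemma exists_isMaxIndepIn_notMem {x v : V} (hv : v ∈ A) (hxv : G.Adj x v) :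
    ∃ S, IsMaxIndepIn G A S ∧ x ∉ S :=
  let ⟨S, hS, hvS⟩ := exists_isMaxIndepIn_mem hv
  ⟨S, hS, fun hxS => hS.1.2 x hxS v hvS hxv⟩

lemma exists_adj_of_connected_induce {x : V} (hconn : (G.induce (A : Set V)).Connected)
    (hx : x ∈ A) (hA : 2 ≤ A.card) : ∃ v ∈ A, G.Adj x v := by
  have : Nontrivial (A : Set V) := Set.nontrivial_coe_sort.2 (one_lt_card_iff_nontrivial.1 hA)
  obtain ⟨⟨v, hv⟩, hxv⟩ := hconn.preconnected.exists_adj_of_nontrivial ⟨x, hx⟩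
  exact ⟨v, hv, hxv⟩

/-- The data of the attachment graph `G(G_1, …, G_n) = G ⊔ ⨆ i, Gs i`, with `B i = V(G_i)` and
`x i = x_{i1}`. -/
structure IsAttachment {n : ℕ} (x : Fin n → V) (B : Fin n → Finset V) (G : SimpleGraph V)
    (Gs : Fin n → SimpleGraph V) : Prop where
  mem_block : ∀ i, x i ∈ B i
  disjoint : ∀ i j, i ≠ j → Disjoint (B i) (B j)
  base_adj : ∀ u v, G.Adj u v → (∃ i, u = x i) ∧ ∃ j, v = x j
  block_adj : ∀ i u v, (Gs i).Adj u v → u ∈ B i ∧ v ∈ B i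

namespace IsAttachment

variable {n : ℕ} {x : Fin n → V} {B : Fin n → Finset V} {G : SimpleGraph V}
  {Gs : Fin n → SimpleGraph V} {S : Finset V}

lemma eq_of_mem_block (hA : IsAttachment x B G Gs) {u : V} {i j : Fin n} (hi : u ∈ B i)
    (hj : u ∈ B j) : i = j := by
  by_contra hij
  exact disjoint_left.1 (hA.disjoint i j hij) hi hj

lemma adj_iff (hA : IsAttachment x B G Gs) {u v : V} {i : Fin n} (hu : u ∈ B i) :
    (G ⊔ ⨆ j, Gs j).Adj u v ↔ (Gs i).Adj u v ∨ (u = x i ∧ G.Adj u v) := by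
  simp only [SimpleGraph.sup_adj, SimpleGraph.iSup_adj]
  constructor
  · rintro (h | ⟨j, h⟩)
    · obtain ⟨⟨j, rfl⟩, -⟩ := hA.base_adj u v h
      exact Or.inr ⟨by rw [hA.eq_of_mem_block (hA.mem_block j) hu], h⟩
    · exact Or.inl (hA.eq_of_mem_block (hA.block_adj j u v h).1 hu ▸ h)
  · rintro (h | ⟨-, h⟩)
    · exact Or.inr ⟨i, h⟩
    · exact Or.inl h

lemma not_adj_of_forall_mem_eq (hA : IsAttachment x B G Gs) {k : Fin n}
    (h : ∀ j, x j ∈ S → j = k) : ∀ u ∈ S, ∀ v ∈ S, ¬G.Adj u v := by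
  intro u hu v hv huv
  obtain ⟨⟨j, rfl⟩, j', rfl⟩ := hA.base_adj u v huv
  rw [h j hu, h j' hv] at huv
  exact G.irrefl huv

end IsAttachment

end

section

variable {G : SimpleGraph V} {A S : Finset V}

lemma IsIndepIn.insert (h : IsIndepIn G A S) {y : V} (hy : y ∈ A)
    (hyS : ∀ v ∈ S, ¬G.Adj y v) : IsIndepIn G A (insert y S) := by
  refine ⟨insert_subset hy h.1, ?_⟩
  simp only [mem_insert, forall_eq_or_imp]
  exact ⟨⟨G.irrefl, hyS⟩, fun u hu => ⟨fun h' => hyS u hu h'.symm, h.2 u hu⟩⟩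

theorem isMaxIndepIn_iff :
    IsMaxIndepIn G A S ↔ IsIndepIn G A S ∧ ∀ y ∈ A, y ∉ S → ∃ v ∈ S, G.Adj y v := by
  refine ⟨fun h => ⟨h.1, fun y hy hyS => ?_⟩, fun ⟨hS, hdom⟩ => ⟨hS, fun T hT hST => ?_⟩⟩
  · by_contra! hno
    exact hyS (h.2 _ (h.1.insert hy hno) (subset_insert y S) ▸ mem_insert_self y S)
  · refine hST.antisymm fun y hy => ?_
    by_contra hyS
    obtain ⟨v, hv, hyv⟩ := hdom y (hT.1 hy) hyS
    exact hT.2 y hy v (hST hv) hyv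

lemma IsMaxIndepIn.of_erase {x : V} (h : IsMaxIndepIn G (A.erase x) S)
    (hx : ∃ v ∈ S, G.Adj x v) : IsMaxIndepIn G A S := by
  obtain ⟨⟨hSA, hS⟩, hdom⟩ := isMaxIndepIn_iff.1 h
  refine isMaxIndepIn_iff.2 ⟨⟨hSA.trans (erase_subset x A), hS⟩, fun y hy hyS => ?_⟩
  rcases eq_or_ne y x with rfl | hyx
  · exact hx
  · exact hdom y (mem_erase.2 ⟨hyx, hy⟩) hyS

lemma IsMaxIndepIn.insert_of_erase {x : V} (h : IsMaxIndepIn G (A.erase x) S) (hx : x ∈ A)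
    (hno : ∀ v ∈ S, ¬G.Adj x v) : IsMaxIndepIn G A (insert x S) := by
  obtain ⟨⟨hSA, hS⟩, hdom⟩ := isMaxIndepIn_iff.1 h
  refine isMaxIndepIn_iff.2 ⟨IsIndepIn.insert ⟨hSA.trans (erase_subset x A), hS⟩ hx hno,
    fun y hy hyS => ?_⟩
  rw [mem_insert, not_or] at hyS
  obtain ⟨v, hv, hyv⟩ := hdom y (mem_erase.2 ⟨hyS.1, hy⟩) hyS.2
  exact ⟨v, mem_insert_of_mem hv, hyv⟩

lemma isMaxIndepIn_or_erase_iff {x : V} (hx : x ∈ A) {P : Prop} :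
    IsMaxIndepIn G A S ∨ (IsMaxIndepIn G (A.erase x) S ∧ P) ↔
      IsIndepIn G A S ∧ ∀ y ∈ A, y ∉ S → (∃ v ∈ S, G.Adj y v) ∨ (y = x ∧ P) := by
  constructor
  · rintro (h | ⟨h, hP⟩)
    · exact ⟨h.1, fun y hy hyS => Or.inl ((isMaxIndepIn_iff.1 h).2 y hy hyS)⟩
    · obtain ⟨⟨hSA, hS⟩, hdom⟩ := isMaxIndepIn_iff.1 h
      refine ⟨⟨hSA.trans (erase_subset x A), hS⟩, fun y hy hyS => ?_⟩
      rcases eq_or_ne y x with rfl | hyx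
      · exact Or.inr ⟨rfl, hP⟩
      · exact Or.inl (hdom y (mem_erase.2 ⟨hyx, hy⟩) hyS)
  · rintro ⟨hS, hdom⟩
    have hdom' : ∀ y ∈ A, y ∉ S → y ≠ x → ∃ v ∈ S, G.Adj y v := fun y hy hyS hyx =>
      (hdom y hy hyS).resolve_right fun h => hyx h.1
    by_cases hxS : x ∈ S ∨ ∃ v ∈ S, G.Adj x v
    · refine Or.inl (isMaxIndepIn_iff.2 ⟨hS, fun y hy hyS => ?_⟩)
      rcases eq_or_ne y x with rfl | hyx
      · exact hxS.resolve_left hyS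
      · exact hdom' y hy hyS hyx
    · rw [not_or] at hxS
      refine Or.inr ⟨isMaxIndepIn_iff.2 ⟨⟨fun y hy => ?_, hS.2⟩, fun y hy hyS => ?_⟩,
        ((hdom x hx hxS.1).resolve_left hxS.2).2⟩
      · exact mem_erase.2 ⟨fun h => hxS.1 (h ▸ hy), hS.1 hy⟩
      · exact hdom' y (mem_of_mem_erase hy) hyS (ne_of_mem_erase hy)

theorem UnmixedOn.exists_adj_of_erase (hA : UnmixedOn G A) {x v : V}
    (hA' : UnmixedOn G (A.erase x)) (hx : x ∈ A) (hv : v ∈ A) (hxv : G.Adj x v)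
    (hS : IsMaxIndepIn G (A.erase x) S) : ∃ u ∈ S, G.Adj x u := by
  by_contra! hno
  -- `insert x S` and `Q` would both be maximal in `G`, while `|S| = |Q|` in `G \ x`
  obtain ⟨Q, hQ, hvQ⟩ := exists_isMaxIndepIn_mem (G := G) (mem_erase.2 ⟨hxv.ne', hv⟩)
  have hSQ := hA' _ _ hS hQ
  have hxSQ := hA _ _ (hS.insert_of_erase hx hno) (hQ.of_erase ⟨v, hvQ, hxv⟩)
  rw [card_insert_of_notMem fun h => (mem_erase.1 (hS.1.1 h)).1 rfl] at hxSQ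
  omega

end

namespace IsAttachment

variable {n : ℕ} {x : Fin n → V} {B : Fin n → Finset V} {G : SimpleGraph V}
  {Gs : Fin n → SimpleGraph V} {S : Finset V}

lemma inter_biUnion_eq (hA : IsAttachment x B G Gs) {c : Fin n → Finset V}
    (hc : ∀ j, c j ⊆ B j) (i : Fin n) : univ.biUnion c ∩ B i = c i := by
  ext u
  simp only [mem_inter, mem_biUnion, mem_univ, true_and]
  refine ⟨fun ⟨⟨j, hj⟩, hi⟩ => hA.eq_of_mem_block (hc j hj) hi ▸ hj, fun h => ⟨⟨i, h⟩, hc i h⟩⟩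

lemma card_eq_sum_card_inter (hA : IsAttachment x B G Gs) (hS : S ⊆ univ.biUnion B) :
    S.card = ∑ i, (S ∩ B i).card := by
  conv_lhs => rw [← inter_eq_left.2 hS, inter_biUnion]
  exact card_biUnion fun i _ j _ hij =>
    (hA.disjoint i j hij).mono inter_subset_right inter_subset_right

lemma isIndepIn_iff (hA : IsAttachment x B G Gs) (hS : S ⊆ univ.biUnion B) :
    IsIndepIn (G ⊔ ⨆ i, Gs i) (univ.biUnion B) S ↔
      (∀ u ∈ S, ∀ v ∈ S, ¬G.Adj u v) ∧ ∀ i, IsIndepIn (Gs i) (B i) (S ∩ B i) := by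
  constructor
  · rintro ⟨-, h⟩
    refine ⟨fun u hu v hv huv => h u hu v hv (le_sup_left (b := ⨆ i, Gs i) huv), fun i =>
      ⟨inter_subset_right, fun u hu v hv huv => h u (mem_inter.1 hu).1 v (mem_inter.1 hv).1 ?_⟩⟩
    exact ((le_iSup Gs i).trans le_sup_right) huv
  · rintro ⟨hG, hblock⟩
    refine ⟨hS, fun u hu v hv huv => ?_⟩
    obtain ⟨i, -, hi⟩ := mem_biUnion.1 (hS hu)
    rcases (hA.adj_iff hi).1 huv with h | ⟨-, h⟩
    · exact (hblock i).2 u (mem_inter.2 ⟨hu, hi⟩) v (mem_inter.2 ⟨hv, (hA.block_adj i u v h).2⟩) h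
    · exact hG u hu v hv h

lemma exists_adj_iff (hA : IsAttachment x B G Gs) {y : V} {i : Fin n} (hy : y ∈ B i) :
    (∃ v ∈ S, (G ⊔ ⨆ j, Gs j).Adj y v) ↔
      (∃ v ∈ S ∩ B i, (Gs i).Adj y v) ∨ (y = x i ∧ ∃ v ∈ S, G.Adj (x i) v) := by
  simp_rw [hA.adj_iff hy]
  constructor
  · rintro ⟨v, hv, h | ⟨rfl, h⟩⟩
    · exact Or.inl ⟨v, mem_inter.2 ⟨hv, (hA.block_adj i y v h).2⟩, h⟩
    · exact Or.inr ⟨rfl, v, hv, h⟩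
  · rintro (⟨v, hv, h⟩ | ⟨rfl, v, hv, h⟩)
    · exact ⟨v, (mem_inter.1 hv).1, Or.inl h⟩
    · exact ⟨v, hv, Or.inr ⟨rfl, h⟩⟩

theorem isMaxIndepIn_iff (hA : IsAttachment x B G Gs) (hS : S ⊆ univ.biUnion B) :
    IsMaxIndepIn (G ⊔ ⨆ i, Gs i) (univ.biUnion B) S ↔
      (∀ u ∈ S, ∀ v ∈ S, ¬G.Adj u v) ∧ ∀ i, IsMaxIndepIn (Gs i) (B i) (S ∩ B i) ∨
        (IsMaxIndepIn (Gs i) ((B i).erase (x i)) (S ∩ B i) ∧ ∃ v ∈ S, G.Adj (x i) v) := by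
  simp_rw [isMaxIndepIn_or_erase_iff (hA.mem_block _), forall_and, _root_.isMaxIndepIn_iff,
    hA.isIndepIn_iff hS, and_assoc]
  refine and_congr_right' (and_congr_right' ⟨fun h i y hy hyS => ?_, fun h y hy hyS => ?_⟩)
  · rw [← hA.exists_adj_iff hy]
    exact h y (mem_biUnion.2 ⟨i, mem_univ i, hy⟩) fun h' => hyS (mem_inter.2 ⟨h', hy⟩)
  · obtain ⟨i, -, hi⟩ := mem_biUnion.1 hy
    rw [hA.exists_adj_iff hi]
    exact h i y hi fun h' => hyS (mem_inter.1 h').1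

lemma isMaxIndepIn_biUnion (hA : IsAttachment x B G Gs) {c : Fin n → Finset V}
    (hc : ∀ j, c j ⊆ B j) (hG : ∀ u ∈ univ.biUnion c, ∀ v ∈ univ.biUnion c, ¬G.Adj u v)
    (hblock : ∀ i, IsMaxIndepIn (Gs i) (B i) (c i) ∨
      (IsMaxIndepIn (Gs i) ((B i).erase (x i)) (c i) ∧ ∃ v ∈ univ.biUnion c, G.Adj (x i) v)) :
    IsMaxIndepIn (G ⊔ ⨆ i, Gs i) (univ.biUnion B) (univ.biUnion c) :=
  (hA.isMaxIndepIn_iff (biUnion_mono fun j _ => hc j)).2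
    ⟨hG, fun i => by rw [hA.inter_biUnion_eq hc]; exact hblock i⟩

lemma mem_biUnion_iff (hA : IsAttachment x B G Gs) {c : Fin n → Finset V} (hc : ∀ j, c j ⊆ B j)
    {y : V} {i : Fin n} (hy : y ∈ B i) : y ∈ univ.biUnion c ↔ y ∈ c i := by
  rw [← hA.inter_biUnion_eq hc i, mem_inter, and_iff_left hy]

lemma card_eq_of_isMaxIndepIn_update (hA : IsAttachment x B G Gs)
    (hU : UnmixedOn (G ⊔ ⨆ i, Gs i) (univ.biUnion B)) {c : Fin n → Finset V}
    (hc : ∀ j, c j ⊆ B j) {i : Fin n} {T : Finset V} (hS : S ⊆ B i) (hT : T ⊆ B i)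
    (hS' : IsMaxIndepIn (G ⊔ ⨆ i, Gs i) (univ.biUnion B) (univ.biUnion (update c i S)))
    (hT' : IsMaxIndepIn (G ⊔ ⨆ i, Gs i) (univ.biUnion B) (univ.biUnion (update c i T))) :
    S.card = T.card := by
  have hcard {R : Finset V} (hR : R ⊆ B i) :
      (univ.biUnion (update c i R)).card = R.card + ∑ j ∈ univ.erase i, (c j).card := by
    have hsub : ∀ j, update c i R j ⊆ B j :=
      (forall_update_iff c fun j s => s ⊆ B j).2 ⟨hR, fun j _ => hc j⟩
    rw [card_biUnion fun j _ k _ hjk => (hA.disjoint j k hjk).mono (hsub j) (hsub k),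
      ← add_sum_erase _ _ (mem_univ i), update_self]
    exact congrArg _ (sum_congr rfl fun j hj => by rw [update_of_ne (ne_of_mem_erase hj)])
  have h := hU _ _ hS' hT'
  rwa [hcard hS, hcard hT, add_left_inj] at h

theorem unmixedOn_block (hA : IsAttachment x B G Gs)
    (hU : UnmixedOn (G ⊔ ⨆ i, Gs i) (univ.biUnion B))
    (hnbr : ∀ j, ∃ v ∈ B j, (Gs j).Adj (x j) v) (i : Fin n) : UnmixedOn (Gs i) (B i) := by
  choose M hM hxM using fun j => (hnbr j).elim fun v hv => exists_isMaxIndepIn_notMem hv.1 hv.2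
  suffices hglue : ∀ S, IsMaxIndepIn (Gs i) (B i) S →
      IsMaxIndepIn (G ⊔ ⨆ i, Gs i) (univ.biUnion B) (univ.biUnion (update M i S)) from
    fun S T hS hT => hA.card_eq_of_isMaxIndepIn_update hU (fun j => (hM j).1.1) hS.1.1 hT.1.1
      (hglue S hS) (hglue T hT)
  intro S hS
  have hblock : ∀ j, IsMaxIndepIn (Gs j) (B j) (update M i S j) :=
    (forall_update_iff M fun j s => IsMaxIndepIn (Gs j) (B j) s).2 ⟨hS, fun j _ => hM j⟩
  have hsub j : update M i S j ⊆ B j := (hblock j).1.1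
  refine hA.isMaxIndepIn_biUnion hsub (hA.not_adj_of_forall_mem_eq (k := i) fun j hj => ?_)
    fun j => Or.inl (hblock j)
  by_contra hji
  rw [hA.mem_biUnion_iff hsub (hA.mem_block j), update_of_ne hji] at hj
  exact hxM j hj

theorem unmixedOn_erase_block (hA : IsAttachment x B G Gs)
    (hU : UnmixedOn (G ⊔ ⨆ i, Gs i) (univ.biUnion B))
    (hnbr : ∀ j, ∃ v ∈ B j, (Gs j).Adj (x j) v) {i k : Fin n} (hik : G.Adj (x i) (x k)) :
    UnmixedOn (Gs i) ((B i).erase (x i)) := by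
  choose M hM hxM using fun j => (hnbr j).elim fun v hv => exists_isMaxIndepIn_notMem hv.1 hv.2
  obtain ⟨Mk, hMk, hxMk⟩ := exists_isMaxIndepIn_mem (G := Gs k) (hA.mem_block k)
  have hki : k ≠ i := by rintro rfl; exact G.irrefl hik
  set c := update M k Mk
  have hc : ∀ j, IsMaxIndepIn (Gs j) (B j) (c j) :=
    (forall_update_iff M fun j s => IsMaxIndepIn (Gs j) (B j) s).2 ⟨hMk, fun j _ => hM j⟩
  have hxc j : x j ∈ c j ↔ j = k := by
    obtain rfl | hjk := eq_or_ne j k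
    · simpa [c] using hxMk
    · simpa [c, update_of_ne hjk, hjk] using hxM j
  suffices hglue : ∀ S, IsMaxIndepIn (Gs i) ((B i).erase (x i)) S →
      IsMaxIndepIn (G ⊔ ⨆ i, Gs i) (univ.biUnion B) (univ.biUnion (update c i S)) from
    fun S T hS hT => hA.card_eq_of_isMaxIndepIn_update hU (fun j => (hc j).1.1)
      (hS.1.1.trans (erase_subset _ _)) (hT.1.1.trans (erase_subset _ _)) (hglue S hS) (hglue T hT)
  intro S hS
  have hsub : ∀ j, update c i S j ⊆ B j :=
    (forall_update_iff c fun j s => s ⊆ B j).2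
      ⟨hS.1.1.trans (erase_subset _ _), fun j _ => (hc j).1.1⟩
  have hmem {j : Fin n} : x j ∈ univ.biUnion (update c i S) ↔ x j ∈ update c i S j :=
    hA.mem_biUnion_iff hsub (hA.mem_block j)
  refine hA.isMaxIndepIn_biUnion hsub (hA.not_adj_of_forall_mem_eq (k := k) fun j hj => ?_)
    fun j => ?_
  · rw [hmem] at hj
    obtain rfl | hji := eq_or_ne j i
    · rw [update_self] at hj
      exact absurd rfl (ne_of_mem_erase (hS.1.1 hj))
    · exact (hxc j).1 (by rwa [update_of_ne hji] at hj)
  · obtain rfl | hji := eq_or_ne j i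
    · rw [update_self]
      exact Or.inr ⟨hS, x k, hmem.2 (by rw [update_of_ne hki]; exact (hxc k).2 rfl), hik⟩
    · rw [update_of_ne hji]
      exact Or.inl (hc j)

theorem isMaxIndepIn_inter_block (hA : IsAttachment x B G Gs)
    (hS : IsMaxIndepIn (G ⊔ ⨆ i, Gs i) (univ.biUnion B) S) {i : Fin n}
    (hnbr : ∃ v ∈ B i, (Gs i).Adj (x i) v) (hU : UnmixedOn (Gs i) (B i))
    (hU' : (∃ v, G.Adj (x i) v) → UnmixedOn (Gs i) ((B i).erase (x i))) :
    IsMaxIndepIn (Gs i) (B i) (S ∩ B i) := by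
  obtain ⟨w, hw, hxw⟩ := hnbr
  rcases ((hA.isMaxIndepIn_iff hS.1.1).1 hS).2 i with h | ⟨h, v, -, hv⟩
  · exact h
  · exact h.of_erase (hU.exists_adj_of_erase (hU' ⟨v, hv⟩) (hA.mem_block i) hw hxw h)

end IsAttachment

theorem stmt_11_general {V : Type*} [DecidableEq V] (n t : ℕ) (x : Fin n → V)
    (B : Fin n → Finset V) (G : SimpleGraph V) (Gs : Fin n → SimpleGraph V)
    (hGsupp : ∀ u v, G.Adj u v → (∃ i, u = x i) ∧ (∃ j, v = x j))
    -- the isolated vertices of `G` are exactly `x i` for `i < t`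
    (hiso : ∀ i : Fin n, (∀ u, ¬G.Adj (x i) u) ↔ (i : ℕ) < t)
    (hxB : ∀ i, x i ∈ B i)
    (hBcard : ∀ i, 2 ≤ (B i).card)
    (hBdisj : ∀ i j, i ≠ j → Disjoint (B i) (B j))
    (hGssupp : ∀ i, ∀ u v, (Gs i).Adj u v → u ∈ B i ∧ v ∈ B i)
    (hconn : ∀ i, ((Gs i).induce ((B i : Set V))).Connected) :
    UnmixedOn (G ⊔ ⨆ i, Gs i) (Finset.univ.biUnion B) ↔
      (∀ i, UnmixedOn (Gs i) (B i)) ∧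
        ∀ i : Fin n, t ≤ (i : ℕ) → UnmixedOn (Gs i) ((B i).erase (x i)) := by
  have hA : IsAttachment x B G Gs := ⟨hxB, hBdisj, hGsupp, hGssupp⟩
  have hnbr i : ∃ v ∈ B i, (Gs i).Adj (x i) v :=
    exists_adj_of_connected_induce (hconn i) (hxB i) (hBcard i)
  have hnonisolated i : (∃ v, G.Adj (x i) v) ↔ t ≤ (i : ℕ) := by
    rw [← not_lt, ← hiso i, not_forall_not]
  constructor
  · refine fun hU => ⟨hA.unmixedOn_block hU hnbr, fun i hi => ?_⟩
    obtain ⟨u, hu⟩ := (hnonisolated i).2 hi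
    obtain ⟨-, k, rfl⟩ := hGsupp _ _ hu
    exact hA.unmixedOn_erase_block hU hnbr hu
  · rintro ⟨hU, hU'⟩ S T hS hT
    have hblock {S} (hS : IsMaxIndepIn (G ⊔ ⨆ i, Gs i) (univ.biUnion B) S) (i : Fin n) :=
      hA.isMaxIndepIn_inter_block hS (hnbr i) (hU i) fun h => hU' i ((hnonisolated i).1 h)
    rw [hA.card_eq_sum_card_inter hS.1.1, hA.card_eq_sum_card_inter hT.1.1]
    exact sum_congr rfl fun i _ => hU i _ _ (hblock hS i) (hblock hT i)

/-- If the isolated vertices of `G` are exactly `x i` for `i < t`, then the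
attachment graph `G(G_1, …, G_n)` is unmixed iff every `Gs i` is unmixed and
`Gs i \ {x i}` is unmixed for every `i ≥ t`. -/
theorem stmt_11 {V : Type*} [DecidableEq V] (n t : ℕ) (ht : t ≤ n) (x : Fin n → V)
    (B : Fin n → Finset V) (G : SimpleGraph V) (Gs : Fin n → SimpleGraph V)
    (hxinj : Function.Injective x)
    (hGsupp : ∀ u v, G.Adj u v → (∃ i, u = x i) ∧ (∃ j, v = x j))
    -- the isolated vertices of `G` are exactly `x i` for `i < t`
    (hiso : ∀ i : Fin n, (∀ u, ¬G.Adj (x i) u) ↔ (i : ℕ) < t)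
    (hxB : ∀ i, x i ∈ B i)
    (hBcard : ∀ i, 2 ≤ (B i).card)
    (hBdisj : ∀ i j, i ≠ j → Disjoint (B i) (B j))
    (hGssupp : ∀ i, ∀ u v, (Gs i).Adj u v → u ∈ B i ∧ v ∈ B i)
    (hconn : ∀ i, ((Gs i).induce ((B i : Set V))).Connected) :
    UnmixedOn (G ⊔ ⨆ i, Gs i) (Finset.univ.biUnion B) ↔
      (∀ i, UnmixedOn (Gs i) (B i)) ∧
        ∀ i : Fin n, t ≤ (i : ℕ) → UnmixedOn (Gs i) ((B i).erase (x i)) :=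
  stmt_11_general n t x B G Gs hGsupp hiso hxB hBcard hBdisj hGssupp hconn
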